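/- arXiv:1601.02928 — 2 statements merged into one kernel-verified Lean document; each statement's English description precedes it below -/
import Mathlib

section
/- Let σ be a permutation of size n and A the binary search tree of σ built by the recursive insertion-by-first-value algorithm. Then (i) applying the root-selection algorithm on weighted Dyck paths to ψ_FV(σ) yields the tree A; and (ii) if (D,w) = ψ_FV^0(σ), applying the same root-selection algorithm to the weighted path obtained from (D,w) by removing the first step of D and appending a down-step at its end also yields the tree A. -/
open scoped Classical
noncomputable section

/-- Value of `σ` at the 1-indexed position `j`, with the convention that positions
outside `[1,n]` (in particular positions `0` and `n+1`) carry the value `0`. -/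
def pval (n : ℕ) (σ : Equiv.Perm (Fin n)) (j : ℕ) : ℕ :=
  if h : 1 ≤ j ∧ j ≤ n then ((σ ⟨j - 1, by omega⟩ : Fin n) : ℕ) + 1 else 0
/-- Value of `σ` at the 1-indexed position `j`, with the conventions `σ_0 = 0` and
`σ_{n+1} = n+1`. -/
def pval1 (n : ℕ) (σ : Equiv.Perm (Fin n)) (j : ℕ) : ℕ :=
  if j = 0 then 0 else if j ≤ n then pval n σ j else n + 1
/-- The (1-indexed) position of a value `v ∈ [1,n]` in `σ`. -/
def ppos (n : ℕ) (σ : Equiv.Perm (Fin n)) (v : ℕ) : ℕ :=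
  if h : 1 ≤ v ∧ v ≤ n then ((σ.symm ⟨v - 1, by omega⟩ : Fin n) : ℕ) + 1 else 0
/-- Number of 31-2 patterns of `σ` in which the value `k` plays the role of the `2`. -/
def totk (n : ℕ) (σ : Equiv.Perm (Fin n)) (k : ℕ) : ℕ :=
  ((Finset.Icc 1 n ×ˢ Finset.Icc 1 n).filter (fun p =>
    p.1 + 1 < p.2 ∧ pval n σ (p.1 + 1) < pval n σ p.2 ∧ pval n σ p.2 < pval n σ p.1 ∧
      pval n σ p.2 = k)).card
/-- The Dyck path of the Françon–Viennot map (conventions `σ_0 = 0`, `σ_{n+1} = n+1`):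
for `k = σ_j`, step `2k-1` is up iff `σ_j < σ_{j+1}` and step `2k` is up iff
`¬ (σ_{j-1} < σ_j)`. -/
def fvPath (n : ℕ) (σ : Equiv.Perm (Fin n)) : ℕ → Bool := fun m =>
  if 1 ≤ m ∧ m ≤ 2 * n then
    if m % 2 = 1 then
      if pval1 n σ (ppos n σ ((m + 1) / 2)) < pval1 n σ (ppos n σ ((m + 1) / 2) + 1)
        then true else false
    else
      if pval1 n σ (ppos n σ (m / 2) - 1) < pval1 n σ (ppos n σ (m / 2))
        then false else true
  else false
/-- The weight of the Françon–Viennot map: `w k = tot_k σ`. -/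
def fvWeight (n : ℕ) (σ : Equiv.Perm (Fin n)) : ℕ → ℕ := fun k =>
  if 1 ≤ k ∧ k ≤ n then totk n σ k else 0
/-- The Dyck path of the type-0 Françon–Viennot map (conventions `σ_0 = σ_{n+1} = 0`):
the Françon–Viennot rules applied to the values `1, …, n-1`, an up-step prepended and a
down-step appended. -/
def fv0Path (n : ℕ) (σ : Equiv.Perm (Fin n)) : ℕ → Bool := fun m =>
  if m = 0 ∨ 2 * n < m then false
  else if m = 1 then true
  else if m = 2 * n then false
  else
    if (m - 1) % 2 = 1 then
      if pval n σ (ppos n σ (m / 2)) < pval n σ (ppos n σ (m / 2) + 1)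
        then true else false
    else
      if pval n σ (ppos n σ ((m - 1) / 2) - 1) < pval n σ (ppos n σ ((m - 1) / 2))
        then false else true
/-- The weight of the type-0 Françon–Viennot map: `w k = tot_k σ` for `k ≤ n-1`,
and a `0` appended at position `n`. -/
def fv0Weight (n : ℕ) (σ : Equiv.Perm (Fin n)) : ℕ → ℕ := fun k =>
  if 1 ≤ k ∧ k + 1 ≤ n then totk n σ k else 0

/-! ### The involution ψ on (weighted) Dyck paths -/
/-- Labeled binary trees. -/
inductive BT : Type
  | nil : BT
  | node : ℕ → BT → BT → BT
/-- The root label of a binary tree, if any. -/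
def BT.root? : BT → Option ℕ
  | .nil => none
  | .node v _ _ => some v
/-- The set of labels of a binary tree. -/
def BT.labels : BT → Finset ℕ
  | .nil => ∅
  | .node v l r => insert v (l.labels ∪ r.labels)
/-- The binary-search-tree property. -/
def BT.IsBST : BT → Prop
  | .nil => True
  | .node v l r =>
      (∀ y ∈ l.labels, y < v) ∧ (∀ y ∈ r.labels, v < y) ∧ l.IsBST ∧ r.IsBST
/-- Restriction of a binary search tree to the interval of values `[a, b]`. -/
def BT.restrict (a b : ℕ) : BT → BT
  | .nil => .nil
  | .node v l r =>
      if v < a then r.restrict a b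
      else if b < v then l.restrict a b
      else .node v (l.restrict a b) (r.restrict a b)
/-- Build a binary tree on the interval `[a,b]` using `choose` to select roots
(with enough fuel). -/
def buildTreeFuel (choose : ℕ → ℕ → ℕ) : ℕ → ℕ → ℕ → BT
  | 0, _, _ => .nil
  | fuel + 1, a, b =>
    if a ≤ b then
      BT.node (choose a b) (buildTreeFuel choose fuel a (choose a b - 1))
        (buildTreeFuel choose fuel (choose a b + 1) b)
    else .nil
/-- Build a binary tree on the interval `[a,b]` using `choose` to select roots. -/
def buildTree (choose : ℕ → ℕ → ℕ) (a b : ℕ) : BT :=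
  buildTreeFuel choose (b + 1 - a) a b
/-- Root selection for the binary search tree of a permutation: the value of
`[a,b] ∩ [1,n]` appearing first in `σ`. -/
def chooseP (n : ℕ) (σ : Equiv.Perm (Fin n)) (a b : ℕ) : ℕ :=
  pval n σ ((((Finset.Icc (max a 1) (min b n)).image (ppos n σ)).min).getD 0)
/-- The binary search tree of a permutation (recursive first-value algorithm). -/
def bstOfPerm (n : ℕ) (σ : Equiv.Perm (Fin n)) : BT :=
  buildTree (chooseP n σ) 1 n
/-- Root selection on a weighted path: among the positions of `[a,b] ∩ [1,n]` of
minimal weight, the smallest one whose step `2i` is a down-step, and if there is none,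
the largest one. -/
def chooseD (n : ℕ) (D : ℕ → Bool) (w : ℕ → ℕ) (a b : ℕ) : ℕ :=
  let I := Finset.Icc (max a 1) (min b n)
  let M := I.filter (fun i => w i = ((I.image w).min).getD 0)
  (((M.filter (fun i => D (2 * i) = false)).min).getD (M.max.getD 0))
/-- The binary search tree of a weighted path (root-selection algorithm). -/
def bstOfPath (n : ℕ) (D : ℕ → Bool) (w : ℕ → ℕ) : BT :=
  buildTree (chooseD n D w) 1 n
/-- Removing the first step of a path of `2n` steps and appending a down-step. -/
def shiftApp (n : ℕ) (D : ℕ → Bool) : ℕ → Bool := fun j =>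
  if 1 ≤ j ∧ j + 1 ≤ 2 * n then D (j + 1) else false

/-! Let `K` be the value of an interval `[A, B]` appearing first in `σ`, at position `p`.
The values at positions before `p` lie outside `[A, B]`, so a 31-2 pattern whose `31` sits
before `p` has its `2` at every value of `[A, B]` or at none; hence for `k ∈ [A, B]`,
`tot_k = tot_K + #{31-2 patterns of k whose 3 is at position p - 1 or later}`, and `K` has
minimal weight. If `k < K` has minimal weight, then `σ`, which goes from `K` at position `p`
to `k`, can only cross `k` downwards by landing on `k` itself, so step `2k` is an up-step.
If step `2K` is an up-step, then `σ_{p-1} > B`, and `σ_{p-1} σ_p` is the `31` of a pattern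
for every `k > K` of `[A, B]`, so no such `k` has minimal weight. In both cases the
root-selection rule picks `K`. -/

lemma Finset.min_getD_eq_min' {α : Type*} [LinearOrder α] {s : Finset α} (h : s.Nonempty)
    (d : α) : s.min.getD d = s.min' h := by
  rw [← Finset.coe_min' h]
  rfl

lemma Finset.max_getD_eq_max' {α : Type*} [LinearOrder α] {s : Finset α} (h : s.Nonempty)
    (d : α) : s.max.getD d = s.max' h := by
  rw [← Finset.coe_max' h]
  rfl

lemma exists_lt_apply_and_apply_succ_le {α : Type*} [LinearOrder α] {f : ℕ → α} {k : α}
    {i q : ℕ} (hiq : i ≤ q) (hi : k < f i) (hq : f q ≤ k) :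
    ∃ j, i ≤ j ∧ j < q ∧ k < f j ∧ f (j + 1) ≤ k := by
  induction q, hiq using Nat.le_induction with
  | base => exact absurd hq (not_le.mpr hi)
  | succ q hiq ih =>
    by_cases hfq : f q ≤ k
    · obtain ⟨j, hij, hjq, hj⟩ := ih hfq
      exact ⟨j, hij, by omega, hj⟩
    · exact ⟨q, hiq, q.lt_succ_self, not_le.mp hfq, hq⟩

lemma chooseD_eq_of {n a b K : ℕ} {D : ℕ → Bool} {w : ℕ → ℕ}
    (hK : K ∈ Finset.Icc (max a 1) (min b n))
    (hmin : ∀ k ∈ Finset.Icc (max a 1) (min b n), w K ≤ w k)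
    (hup : ∀ k ∈ Finset.Icc (max a 1) (min b n), w k = w K → k < K → D (2 * k) = true)
    (hmax : D (2 * K) = true → ∀ k ∈ Finset.Icc (max a 1) (min b n), w k = w K → k ≤ K) :
    chooseD n D w a b = K := by
  set I := Finset.Icc (max a 1) (min b n)
  have hwK : (I.image w).min.getD 0 = w K := by
    rw [Finset.min_getD_eq_min' (Finset.image_nonempty.mpr ⟨K, hK⟩)]
    refine le_antisymm (Finset.min'_le _ _ (Finset.mem_image_of_mem w hK)) ?_
    exact Finset.le_min' _ _ _ (by simpa using hmin)
  set M := I.filter (fun i => w i = w K)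
  have hKM : K ∈ M := Finset.mem_filter.mpr ⟨hK, rfl⟩
  simp only [chooseD]
  rw [hwK]
  cases hDK : D (2 * K)
  · have hKMd : K ∈ M.filter (fun i => D (2 * i) = false) := Finset.mem_filter.mpr ⟨hKM, hDK⟩
    rw [Finset.min_getD_eq_min' ⟨K, hKMd⟩]
    refine le_antisymm (Finset.min'_le _ _ hKMd) (Finset.le_min' _ _ _ fun k hk => ?_)
    simp only [M, Finset.mem_filter] at hk
    by_contra! hkK
    simp [hup k hk.1.1 hk.1.2 hkK] at hk
  · have hMd : M.filter (fun i => D (2 * i) = false) = ∅ := by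
      refine Finset.filter_eq_empty_iff.mpr fun k hk hDk => ?_
      simp only [M, Finset.mem_filter] at hk
      rcases (hmax hDK k hk.1 hk.2).lt_or_eq with hkK | rfl
      · simp [hup k hk.1 hk.2 hkK] at hDk
      · simp [hDK] at hDk
    rw [hMd, Finset.min_empty]
    change M.max.getD 0 = K
    rw [Finset.max_getD_eq_max' ⟨K, hKM⟩]
    refine le_antisymm (Finset.max'_le _ _ _ fun k hk => ?_) (Finset.le_max' _ _ hKM)
    simp only [M, Finset.mem_filter] at hk
    exact hmax hDK k hk.1 hk.2

def totSet (n : ℕ) (σ : Equiv.Perm (Fin n)) (k : ℕ) : Finset ℕ :=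
  (Finset.Icc 1 n).filter fun j =>
    j + 1 < ppos n σ k ∧ pval n σ (j + 1) < k ∧ k < pval n σ j

section Positions

variable {n : ℕ} (σ : Equiv.Perm (Fin n))

lemma pval_of_out_of_range {j : ℕ} (h : ¬(1 ≤ j ∧ j ≤ n)) : pval n σ j = 0 :=
  dif_neg h

lemma pval_le (j : ℕ) : pval n σ j ≤ n := by
  unfold pval
  split_ifs with h
  · exact (σ ⟨j - 1, by omega⟩).isLt
  · exact Nat.zero_le n

lemma ppos_bounds {k : ℕ} (h1 : 1 ≤ k) (h2 : k ≤ n) :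
    1 ≤ ppos n σ k ∧ ppos n σ k ≤ n := by
  rw [ppos, dif_pos ⟨h1, h2⟩]
  have := (σ.symm ⟨k - 1, by omega⟩).isLt
  omega

lemma pval_ppos {k : ℕ} (h1 : 1 ≤ k) (h2 : k ≤ n) : pval n σ (ppos n σ k) = k := by
  have hb := (σ.symm ⟨k - 1, by omega⟩).isLt
  rw [ppos, dif_pos ⟨h1, h2⟩, pval, dif_pos ⟨by omega, by omega⟩]
  simp only [Nat.add_sub_cancel, Fin.eta, Equiv.apply_symm_apply]
  omega

lemma ppos_pval {j : ℕ} (h1 : 1 ≤ j) (h2 : j ≤ n) : ppos n σ (pval n σ j) = j := by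
  have hb := (σ ⟨j - 1, by omega⟩).isLt
  rw [pval, dif_pos ⟨h1, h2⟩, ppos, dif_pos ⟨by omega, by omega⟩]
  simp only [Nat.add_sub_cancel, Fin.eta, Equiv.symm_apply_apply]
  omega

lemma pval_eq_iff {j k : ℕ} (h1 : 1 ≤ k) (h2 : k ≤ n) :
    pval n σ j = k ↔ j = ppos n σ k := by
  constructor
  · rintro rfl
    by_cases hj : 1 ≤ j ∧ j ≤ n
    · exact (ppos_pval σ hj.1 hj.2).symm
    · rw [pval_of_out_of_range σ hj] at h1
      omega
  · rintro rfl
    exact pval_ppos σ h1 h2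

lemma pval_pred_ppos_ne {k : ℕ} (h1 : 1 ≤ k) (h2 : k ≤ n) :
    pval n σ (ppos n σ k - 1) ≠ k := fun h => by
  have := (pval_eq_iff σ h1 h2).mp h
  have := (ppos_bounds σ h1 h2).1
  omega

lemma pval1_eq_pval {j : ℕ} (h : j ≤ n) : pval1 n σ j = pval n σ j := by
  unfold pval1
  split_ifs with hj
  · rw [hj, pval_of_out_of_range σ (by omega)]
  · rfl

lemma totk_eq_card_totSet {k : ℕ} (h1 : 1 ≤ k) (h2 : k ≤ n) :
    totk n σ k = (totSet n σ k).card := by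
  rw [totk, ← mul_one (totSet n σ k).card, ← Finset.card_singleton (ppos n σ k),
    ← Finset.card_product]
  congr 1
  ext ⟨j, q⟩
  simp only [totSet, Finset.mem_filter, Finset.mem_product, Finset.mem_Icc, Finset.mem_singleton]
  constructor
  · rintro ⟨⟨hj, -⟩, hjq, h31, h12, hq⟩
    obtain rfl := (pval_eq_iff σ h1 h2).mp hq
    rw [hq] at h31 h12
    exact ⟨⟨hj, hjq, h31, h12⟩, rfl⟩
  · rintro ⟨⟨hj, hjq, h31, h12⟩, rfl⟩
    rw [pval_ppos σ h1 h2]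
    exact ⟨⟨hj, ppos_bounds σ h1 h2⟩, hjq, h31, h12, rfl⟩

lemma totk_n_eq_zero : totk n σ n = 0 := by
  rw [totk, Finset.card_eq_zero, Finset.filter_eq_empty_iff]
  rintro ⟨i, j⟩ - ⟨-, -, hlt, heq⟩
  have := pval_le σ i
  simp only at hlt heq
  omega

end Positions

structure IsFirstValueIn {n : ℕ} (σ : Equiv.Perm (Fin n)) (A B K : ℕ) : Prop where
  one_le : 1 ≤ A
  le_n : B ≤ n
  mem : A ≤ K ∧ K ≤ B
  ppos_le : ∀ k, A ≤ k → k ≤ B → ppos n σ K ≤ ppos n σ k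

namespace IsFirstValueIn

variable {n : ℕ} {σ : Equiv.Perm (Fin n)} {A B K k : ℕ}

lemma pval_ppos (hK : IsFirstValueIn σ A B K) : pval n σ (ppos n σ K) = K :=
  _root_.pval_ppos σ (hK.one_le.trans hK.mem.1) (hK.mem.2.trans hK.le_n)

lemma ppos_bounds (hK : IsFirstValueIn σ A B K) : 1 ≤ ppos n σ K ∧ ppos n σ K ≤ n :=
  _root_.ppos_bounds σ (hK.one_le.trans hK.mem.1) (hK.mem.2.trans hK.le_n)

lemma pval_lt_or_lt_of_lt_ppos (hK : IsFirstValueIn σ A B K) {m : ℕ} (h1 : 1 ≤ m)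
    (hm : m < ppos n σ K) : pval n σ m < A ∨ B < pval n σ m := by
  by_contra! hAB
  have hmn : m ≤ n := by have := hK.ppos_bounds; omega
  have := hK.ppos_le _ hAB.1 hAB.2
  rw [ppos_pval σ h1 hmn] at this
  omega

lemma totSet_filter_lt_ppos (hK : IsFirstValueIn σ A B K) (hk : A ≤ k ∧ k ≤ B) :
    (totSet n σ k).filter (· + 1 < ppos n σ K) = totSet n σ K := by
  have hKk := hK.ppos_le k hk.1 hk.2
  have hKAB := hK.mem
  ext j
  simp only [totSet, Finset.mem_filter, Finset.mem_Icc]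
  constructor
  · rintro ⟨⟨hj, -, h31, h12⟩, hjK⟩
    have o1 := hK.pval_lt_or_lt_of_lt_ppos (m := j + 1) (by omega) hjK
    have o2 := hK.pval_lt_or_lt_of_lt_ppos (m := j) hj.1 (by omega)
    exact ⟨hj, hjK, by omega, by omega⟩
  · rintro ⟨hj, hjK, h31, h12⟩
    have o1 := hK.pval_lt_or_lt_of_lt_ppos (m := j + 1) (by omega) hjK
    have o2 := hK.pval_lt_or_lt_of_lt_ppos (m := j) hj.1 (by omega)
    exact ⟨⟨hj, by omega, by omega, by omega⟩, hjK⟩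

lemma totk_eq_add (hK : IsFirstValueIn σ A B K) (hk : A ≤ k ∧ k ≤ B) :
    totk n σ k = totk n σ K + ((totSet n σ k).filter (¬ · + 1 < ppos n σ K)).card := by
  have hKAB := hK.mem
  have := hK.one_le
  have := hK.le_n
  rw [totk_eq_card_totSet σ (by omega) (by omega), totk_eq_card_totSet σ (by omega) (by omega),
    ← hK.totSet_filter_lt_ppos hk, Finset.card_filter_add_card_filter_not]

lemma totk_le (hK : IsFirstValueIn σ A B K) (hk : A ≤ k ∧ k ≤ B) :
    totk n σ K ≤ totk n σ k :=
  (hK.totk_eq_add hk).symm ▸ Nat.le_add_right _ _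

lemma totk_eq_iff (hK : IsFirstValueIn σ A B K) (hk : A ≤ k ∧ k ≤ B) :
    totk n σ k = totk n σ K ↔ ∀ j ∈ totSet n σ k, j + 1 < ppos n σ K := by
  rw [hK.totk_eq_add hk, add_eq_left, Finset.card_eq_zero, Finset.filter_eq_empty_iff]
  simp only [not_not]

lemma lt_pval_pred_of_lt (hK : IsFirstValueIn σ A B K) (hk : A ≤ k ∧ k ≤ B) (hkK : k < K)
    (hw : totk n σ k = totk n σ K) : k < pval n σ (ppos n σ k - 1) := by
  have hk1 : 1 ≤ k := hK.one_le.trans hk.1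
  have hkn : k ≤ n := hk.2.trans hK.le_n
  have hpk := _root_.ppos_bounds σ hk1 hkn
  have hpK := hK.ppos_bounds
  obtain ⟨j, hKj, hjk, hj, hj1⟩ := exists_lt_apply_and_apply_succ_le (f := pval n σ)
    (hK.ppos_le k hk.1 hk.2) (by rwa [hK.pval_ppos]) (_root_.pval_ppos σ hk1 hkn).le
  by_cases hlast : j + 1 = ppos n σ k
  · rwa [← hlast, Nat.add_sub_cancel]
  · have hj1k : pval n σ (j + 1) ≠ k := fun h => hlast ((pval_eq_iff σ hk1 hkn).mp h)
    have hmem : j ∈ totSet n σ k := by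
      simp only [totSet, Finset.mem_filter, Finset.mem_Icc]
      omega
    have := (hK.totk_eq_iff hk).mp hw j hmem
    omega

lemma le_of_lt_pval_pred (hK : IsFirstValueIn σ A B K)
    (hKup : K < pval n σ (ppos n σ K - 1)) (hk : A ≤ k ∧ k ≤ B)
    (hw : totk n σ k = totk n σ K) : k ≤ K := by
  by_contra! hKk
  have hK1 : 1 ≤ K := hK.one_le.trans hK.mem.1
  have hpK := hK.ppos_bounds
  have hp2 : 2 ≤ ppos n σ K := by
    by_contra
    rw [show ppos n σ K - 1 = 0 by omega, pval_of_out_of_range σ (by omega)] at hKup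
    omega
  have hout := hK.pval_lt_or_lt_of_lt_ppos (m := ppos n σ K - 1) (by omega) (by omega)
  have hlt : ppos n σ K < ppos n σ k := by
    refine (hK.ppos_le k hk.1 hk.2).lt_of_ne fun h => ?_
    have := congrArg (pval n σ) h
    rw [hK.pval_ppos, _root_.pval_ppos σ (by omega) (hk.2.trans hK.le_n)] at this
    omega
  have hmem : ppos n σ K - 1 ∈ totSet n σ k := by
    have hKAB := hK.mem
    simp only [totSet, Finset.mem_filter, Finset.mem_Icc,
      Nat.sub_add_cancel (by omega : 1 ≤ ppos n σ K), hK.pval_ppos]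
    omega
  have := (hK.totk_eq_iff hk).mp hw _ hmem
  omega

end IsFirstValueIn

lemma chooseP_isFirstValueIn {n : ℕ} (σ : Equiv.Perm (Fin n)) {a b : ℕ}
    (hab : max a 1 ≤ min b n) : IsFirstValueIn σ (max a 1) (min b n) (chooseP n σ a b) := by
  have hJ : ((Finset.Icc (max a 1) (min b n)).image (ppos n σ)).Nonempty :=
    (Finset.nonempty_Icc.mpr hab).image _
  obtain ⟨k₀, hk₀, hp⟩ := Finset.mem_image.mp (Finset.min'_mem _ hJ)
  rw [Finset.mem_Icc] at hk₀
  have hc : chooseP n σ a b = k₀ := by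
    rw [chooseP, Finset.min_getD_eq_min' hJ, ← hp, pval_ppos σ (by omega) (by omega)]
  refine ⟨le_max_right _ _, min_le_right _ _, hc ▸ hk₀, fun k hA hB => ?_⟩
  rw [hc, hp]
  exact Finset.min'_le _ _ (Finset.mem_image_of_mem _ (Finset.mem_Icc.mpr ⟨hA, hB⟩))

lemma chooseD_eq_chooseP {n : ℕ} (σ : Equiv.Perm (Fin n)) {D : ℕ → Bool} {w : ℕ → ℕ}
    (hw : ∀ k, 1 ≤ k → k ≤ n → w k = totk n σ k)
    (hD : ∀ k, 1 ≤ k → k ≤ n → (D (2 * k) = false ↔ pval n σ (ppos n σ k - 1) < k)) :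
    chooseD n D w = chooseP n σ := by
  funext a b
  by_cases hab : max a 1 ≤ min b n
  · have hK := chooseP_isFirstValueIn σ hab
    have hI : ∀ k ∈ Finset.Icc (max a 1) (min b n), 1 ≤ k ∧ k ≤ n := fun k hk => by
      rw [Finset.mem_Icc] at hk
      omega
    have hwI : ∀ k ∈ Finset.Icc (max a 1) (min b n), w k = totk n σ k :=
      fun k hk => hw k (hI k hk).1 (hI k hk).2
    have hup : ∀ k ∈ Finset.Icc (max a 1) (min b n),
        D (2 * k) = true ↔ k < pval n σ (ppos n σ k - 1) := fun k hk => by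
      rw [← Bool.not_eq_false, hD k (hI k hk).1 (hI k hk).2, not_lt]
      exact ⟨fun h => h.lt_of_ne (pval_pred_ppos_ne σ (hI k hk).1 (hI k hk).2).symm, le_of_lt⟩
    have hKI : chooseP n σ a b ∈ Finset.Icc (max a 1) (min b n) := Finset.mem_Icc.mpr hK.mem
    refine chooseD_eq_of hKI (fun k hk => ?_) (fun k hk hwk hkK => ?_) (fun hDK k hk hwk => ?_)
    · rw [hwI k hk, hwI _ hKI]
      exact hK.totk_le (Finset.mem_Icc.mp hk)
    · rw [hwI k hk, hwI _ hKI] at hwk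
      exact (hup k hk).mpr (hK.lt_pval_pred_of_lt (Finset.mem_Icc.mp hk) hkK hwk)
    · rw [hwI k hk, hwI _ hKI] at hwk
      exact hK.le_of_lt_pval_pred ((hup _ hKI).mp hDK) (Finset.mem_Icc.mp hk) hwk
  · simp only [chooseD, chooseP, Finset.Icc_eq_empty hab, Finset.image_empty,
      Finset.filter_empty, Finset.min_empty, Finset.max_empty]
    exact (pval_of_out_of_range σ (j := 0) (by omega)).symm

lemma bstOfPath_eq_bstOfPerm {n : ℕ} (σ : Equiv.Perm (Fin n)) {D : ℕ → Bool}
    {w : ℕ → ℕ} (hw : ∀ k, 1 ≤ k → k ≤ n → w k = totk n σ k)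
    (hD : ∀ k, 1 ≤ k → k ≤ n → (D (2 * k) = false ↔ pval n σ (ppos n σ k - 1) < k)) :
    bstOfPath n D w = bstOfPerm n σ := by
  rw [bstOfPath, bstOfPerm, chooseD_eq_chooseP σ hw hD]

section FranconViennot

variable {n : ℕ} (σ : Equiv.Perm (Fin n)) {k : ℕ}

lemma fvWeight_eq_totk (h1 : 1 ≤ k) (h2 : k ≤ n) : fvWeight n σ k = totk n σ k :=
  if_pos ⟨h1, h2⟩

lemma fv0Weight_eq_totk (h1 : 1 ≤ k) (h2 : k ≤ n) : fv0Weight n σ k = totk n σ k := by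
  unfold fv0Weight
  split_ifs
  · rfl
  · rw [show k = n by omega, totk_n_eq_zero]

lemma fvPath_two_mul_eq_false_iff (h1 : 1 ≤ k) (h2 : k ≤ n) :
    fvPath n σ (2 * k) = false ↔ pval n σ (ppos n σ k - 1) < k := by
  have hk := ppos_bounds σ h1 h2
  simp only [fvPath]
  rw [if_pos (by omega), if_neg (by omega), Nat.mul_div_cancel_left k two_pos,
    pval1_eq_pval σ (by omega), pval1_eq_pval σ hk.2, pval_ppos σ h1 h2]
  simp

lemma shiftApp_fv0Path_two_mul_eq_false_iff (h1 : 1 ≤ k) (h2 : k ≤ n) :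
    shiftApp n (fv0Path n σ) (2 * k) = false ↔ pval n σ (ppos n σ k - 1) < k := by
  rcases h2.lt_or_eq with hk | rfl
  · simp only [shiftApp, fv0Path]
    rw [if_pos (by omega), if_neg (by omega), if_neg (by omega), if_neg (by omega),
      if_neg (by omega), show (2 * k + 1 - 1) / 2 = k by omega, pval_ppos σ h1 h2]
    simp
  · simp only [shiftApp, if_neg (show ¬(1 ≤ 2 * k ∧ 2 * k + 1 ≤ 2 * k) by omega), true_iff]
    exact (pval_le σ _).lt_of_ne (pval_pred_ppos_ne σ h1 le_rfl)

end FranconViennot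

/-- Lemma: (i) the root-selection algorithm applied to `ψ_FV(σ)` yields the binary
search tree of `σ`; (ii) the root-selection algorithm applied to the weighted path
obtained from `ψ_FV⁰(σ)` by removing the first step and appending a down-step at the
end also yields the binary search tree of `σ`. -/
theorem bst_from_weighted_paths (n : ℕ) (σ : Equiv.Perm (Fin n)) :
    bstOfPath n (fvPath n σ) (fvWeight n σ) = bstOfPerm n σ ∧
    bstOfPath n (shiftApp n (fv0Path n σ)) (fv0Weight n σ) = bstOfPerm n σ :=
  ⟨bstOfPath_eq_bstOfPerm σ (fun _ => fvWeight_eq_totk σ)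
      (fun _ => fvPath_two_mul_eq_false_iff σ),
    bstOfPath_eq_bstOfPerm σ (fun _ => fv0Weight_eq_totk σ)
      (fun _ => shiftApp_fv0Path_two_mul_eq_false_iff σ)⟩
end
end

section
/- Let σ be a permutation of size n and Ψ = (ψ_FV^0)^{-1} ∘ ψ ∘ ψ_FV. Then σ and Ψ(σ) belong to the same co-sylvester class, i.e., they have the same binary search tree. -/
open scoped Classical
noncomputable section

/-! ### The involution ψ on (weighted) Dyck paths -/
/-- The involution `ψ` on Dyck paths of size `n`: every pair of steps (up,down) or
(down,up) at positions `(2i, 2i+1)` is exchanged. -/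
def psiStep (n : ℕ) (D : ℕ → Bool) : ℕ → Bool := fun j =>
  if j % 2 = 0 ∧ 2 ≤ j ∧ j + 1 ≤ 2 * n ∧ D j ≠ D (j + 1) then D (j + 1)
  else if j % 2 = 1 ∧ 3 ≤ j ∧ j + 1 ≤ 2 * n ∧ D (j - 1) ≠ D j then D (j - 1)
  else D j

namespace CoSylv

variable {n : ℕ}

theorem pval_le (π : Equiv.Perm (Fin n)) (j : ℕ) : pval n π j ≤ n := by
  unfold pval
  split
  · next h => have := (π ⟨j-1, by omega⟩).isLt; omega
  · omega

theorem pval_eq_zero (π : Equiv.Perm (Fin n)) {j : ℕ} (h : ¬ (1 ≤ j ∧ j ≤ n)) :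
    pval n π j = 0 := by
  unfold pval; rw [dif_neg h]

theorem pval_pos (π : Equiv.Perm (Fin n)) {j : ℕ} (h1 : 1 ≤ j) (h2 : j ≤ n) :
    1 ≤ pval n π j := by
  unfold pval; rw [dif_pos ⟨h1, h2⟩]; omega

theorem ppos_mem (π : Equiv.Perm (Fin n)) {v : ℕ} (h1 : 1 ≤ v) (h2 : v ≤ n) :
    1 ≤ ppos n π v ∧ ppos n π v ≤ n := by
  unfold ppos; rw [dif_pos ⟨h1, h2⟩]
  have := (π.symm ⟨v-1, by omega⟩).isLt; omega

theorem pval_ppos (π : Equiv.Perm (Fin n)) {v : ℕ} (h1 : 1 ≤ v) (h2 : v ≤ n) :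
    pval n π (ppos n π v) = v := by
  have hm := ppos_mem π h1 h2
  have hp : ppos n π v = ((π.symm ⟨v-1, by omega⟩ : Fin n) : ℕ) + 1 := by
    unfold ppos; rw [dif_pos ⟨h1, h2⟩]
  have harg : (⟨ppos n π v - 1, by omega⟩ : Fin n) = π.symm ⟨v-1, by omega⟩ := by
    apply Fin.ext
    show ppos n π v - 1 = _
    omega
  unfold pval
  rw [dif_pos hm, harg, Equiv.apply_symm_apply]
  simp; omega

theorem ppos_inj (π : Equiv.Perm (Fin n)) {u v : ℕ} (hu1 : 1 ≤ u) (hu2 : u ≤ n)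
    (hv1 : 1 ≤ v) (hv2 : v ≤ n) (h : ppos n π u = ppos n π v) : u = v := by
  have := pval_ppos π hu1 hu2
  have := pval_ppos π hv1 hv2
  rw [h] at *; omega

/-- if `pval j = k` with `k ≥ 1` then `j = ppos k`. -/
theorem eq_ppos_of_pval (π : Equiv.Perm (Fin n)) {j k : ℕ} (hk : 1 ≤ k)
    (h : pval n π j = k) : j = ppos n π k ∧ 1 ≤ j ∧ j ≤ n ∧ k ≤ n := by
  by_cases hj : 1 ≤ j ∧ j ≤ n
  · have hkn : k ≤ n := h ▸ pval_le π j
    have hp : ppos n π (pval n π j) = j := by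
      have hpm : 1 ≤ pval n π j := pval_pos π hj.1 hj.2
      have hpl : pval n π j ≤ n := pval_le π j
      -- show ppos (pval j) = j
      unfold pval at *
      rw [dif_pos hj] at *
      unfold ppos
      rw [dif_pos ⟨hpm, hpl⟩]
      have harg : (⟨(((π ⟨j-1, by omega⟩ : Fin n) : ℕ) + 1) - 1, by omega⟩ : Fin n)
          = π ⟨j-1, by omega⟩ := by apply Fin.ext; simp
      rw [harg, Equiv.symm_apply_apply]
      simp; omega
    exact ⟨by rw [← h, hp], hj.1, hj.2, hkn⟩
  · rw [pval_eq_zero π hj] at h; omega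

end CoSylv
namespace CoSylv

variable {n : ℕ}

/-- number of "blocks" (maximal runs of values `≥ m`) ending strictly before position `p`. -/
def blt (n : ℕ) (π : Equiv.Perm (Fin n)) (m p : ℕ) : ℕ :=
  ((Finset.Ico 1 p).filter (fun i => m ≤ pval n π i ∧ pval n π (i+1) < m)).card

/-- `k` has a left neighbour and it is `> k`. -/
def cP (n : ℕ) (π : Equiv.Perm (Fin n)) (k : ℕ) : Prop :=
  ¬ (pval n π (ppos n π k - 1) < k)

def Wd (n : ℕ) (π : Equiv.Perm (Fin n)) (k : ℕ) : ℕ :=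
  totk n π k + (if cP n π k then 1 else 0)

/-- `v` appears before every value of `[m, v)`. -/
def Smem (n : ℕ) (π : Equiv.Perm (Fin n)) (m v : ℕ) : Prop :=
  ∀ u, m ≤ u → u < v → ppos n π v < ppos n π u

theorem tot_eq_blt (π : Equiv.Perm (Fin n)) {k : ℕ} (hk1 : 1 ≤ k) (hk2 : k ≤ n) :
    totk n π k = blt n π k (ppos n π k) := by
  classical
  unfold totk blt
  refine Finset.card_bij' (fun p _ => p.1) (fun i _ => (i, ppos n π k)) ?hi ?hj ?li ?ri
  case hi =>
    rintro ⟨p1, p2⟩ hp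
    simp only [Finset.mem_filter, Finset.mem_product, Finset.mem_Icc] at hp
    obtain ⟨⟨hp1, hp2⟩, hlt, h1, h2, h3⟩ := hp
    have hpek := (eq_ppos_of_pval π hk1 h3).1
    simp only [Finset.mem_filter, Finset.mem_Ico]
    subst hpek
    refine ⟨⟨hp1.1, by omega⟩, by omega, by omega⟩
  case hj =>
    rintro i hi
    simp only [Finset.mem_filter, Finset.mem_Ico] at hi
    obtain ⟨⟨hi1, hi2⟩, hv1, hv2⟩ := hi
    have hpm := ppos_mem π hk1 hk2
    have hvk := pval_ppos π hk1 hk2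
    simp only [Finset.mem_filter, Finset.mem_product, Finset.mem_Icc]
    have hne : i + 1 ≠ ppos n π k := by
      intro he; rw [he, hvk] at hv2; omega
    have hgt : k < pval n π i := by
      rcases Nat.lt_or_ge k (pval n π i) with h | h
      · exact h
      · have : pval n π i = k := by omega
        have := (eq_ppos_of_pval π hk1 this).1
        omega
    exact ⟨⟨⟨by omega, by omega⟩, ⟨hpm.1, hpm.2⟩⟩, by omega, by rw [hvk]; omega,
      by rw [hvk]; exact hgt, hvk⟩
  case li =>
    rintro ⟨p1, p2⟩ hp
    simp only [Finset.mem_filter, Finset.mem_product, Finset.mem_Icc] at hp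
    obtain ⟨⟨hp1, hp2⟩, hlt, h1, h2, h3⟩ := hp
    have hpek := (eq_ppos_of_pval π hk1 h3).1
    simp only [Prod.mk.injEq]
    exact ⟨trivial, hpek.symm⟩
  case ri => intros; rfl

theorem blt_stab (π : Equiv.Perm (Fin n)) {m p : ℕ} (hm : 1 ≤ m)
    (hp : p < ppos n π m) : blt n π m p = blt n π (m+1) p := by
  unfold blt
  congr 1
  apply Finset.filter_congr
  intro i hi
  simp only [Finset.mem_Ico] at hi
  have hvi : pval n π i ≠ m := by
    intro h
    have := (eq_ppos_of_pval π hm h).1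
    omega
  have hvi1 : pval n π (i+1) ≠ m := by
    intro h
    have := (eq_ppos_of_pval π hm h).1
    omega
  constructor
  · rintro ⟨ha, hb⟩; exact ⟨by omega, by omega⟩
  · rintro ⟨ha, hb⟩; exact ⟨by omega, by omega⟩

end CoSylv
namespace CoSylv

variable {n : ℕ}

theorem pos_lt_iff (π : Equiv.Perm (Fin n)) {k v : ℕ} (hk1 : 1 ≤ k) (hk2 : k ≤ n)
    (hkv : k < v) (hv : v ≤ n) :
    (ppos n π v < ppos n π k ↔ blt n π (k+1) (ppos n π v) < Wd n π k) := by
  classical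
  have hpk := ppos_mem π hk1 hk2
  have hpv := ppos_mem π (by omega : 1 ≤ v) hv
  have hvv := pval_ppos π (by omega : 1 ≤ v) hv
  have hvk := pval_ppos π hk1 hk2
  set S1 := (Finset.Ico 1 (ppos n π v)).filter
    (fun i => k+1 ≤ pval n π i ∧ pval n π (i+1) < k+1) with hS1
  set S2 := (Finset.Ico 1 (ppos n π k)).filter
    (fun i => k ≤ pval n π i ∧ pval n π (i+1) < k) with hS2
  have hb1 : blt n π (k+1) (ppos n π v) = S1.card := rfl
  have hb2 : totk n π k = S2.card := tot_eq_blt π hk1 hk2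
  constructor
  · intro hlt
    have hsub : S1 ⊆ S2 := by
      intro i hi
      simp only [hS1, hS2, Finset.mem_filter, Finset.mem_Ico] at hi ⊢
      obtain ⟨⟨ha, hb⟩, hc, hd⟩ := hi
      have hne : pval n π (i+1) ≠ k := by
        intro he
        have := (eq_ppos_of_pval π hk1 he).1
        omega
      exact ⟨⟨ha, by omega⟩, by omega, by omega⟩
    by_cases hcp : cP n π k
    · have := Finset.card_le_card hsub
      unfold Wd
      rw [if_pos hcp, hb1, ← hb2] at *
      omega
    · -- find an extra element j* of S2 not in S1
      have hA : ((Finset.Icc (ppos n π v) (ppos n π k - 1)).filter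
          (fun j => k ≤ pval n π j)).Nonempty := by
        refine ⟨ppos n π v, ?_⟩
        simp only [Finset.mem_filter, Finset.mem_Icc]
        exact ⟨⟨le_rfl, by omega⟩, by rw [hvv]; omega⟩
      set j := ((Finset.Icc (ppos n π v) (ppos n π k - 1)).filter
          (fun j => k ≤ pval n π j)).max' hA with hj
      have hjmem := Finset.max'_mem _ hA
      rw [← hj] at hjmem
      simp only [Finset.mem_filter, Finset.mem_Icc] at hjmem
      obtain ⟨⟨hj1, hj2⟩, hj3⟩ := hjmem
      have hcc : pval n π (ppos n π k - 1) < k := by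
        by_contra hc; exact hcp hc
      have hjne : j ≠ ppos n π k - 1 := by
        intro he; rw [he] at hj3; omega
      have hj4 : pval n π (j+1) < k := by
        by_contra hc
        have hmem : j + 1 ∈ (Finset.Icc (ppos n π v) (ppos n π k - 1)).filter
            (fun j => k ≤ pval n π j) := by
          simp only [Finset.mem_filter, Finset.mem_Icc]
          exact ⟨⟨by omega, by omega⟩, by omega⟩
        have := Finset.le_max' _ _ hmem
        rw [← hj] at this
        omega
      have hjS2 : j ∈ S2 := by
        simp only [hS2, Finset.mem_filter, Finset.mem_Ico]
        exact ⟨⟨by omega, by omega⟩, hj3, hj4⟩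
      have hjnS1 : j ∉ S1 := by
        simp only [hS1, Finset.mem_filter, Finset.mem_Ico]
        rintro ⟨⟨_, hb⟩, _⟩
        omega
      have hss : S1 ⊂ S2 := by
        rw [Finset.ssubset_iff_of_subset hsub]
        exact ⟨j, hjS2, hjnS1⟩
      have := Finset.card_lt_card hss
      have e3 : Wd n π k = totk n π k + 0 := by unfold Wd; rw [if_neg hcp]
      omega
  · intro hlt
    by_contra hge
    have hne : ppos n π v ≠ ppos n π k :=
      fun he => by have := ppos_inj π (by omega) hv hk1 hk2 he; omega
    have hgt : ppos n π k < ppos n π v := by omega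
    have hsub : S2 ⊆ S1 := by
      intro i hi
      simp only [hS1, hS2, Finset.mem_filter, Finset.mem_Ico] at hi ⊢
      obtain ⟨⟨ha, hb⟩, hc, hd⟩ := hi
      have hne2 : pval n π i ≠ k := by
        intro he
        have := (eq_ppos_of_pval π hk1 he).1
        omega
      exact ⟨⟨ha, by omega⟩, by omega, by omega⟩
    by_cases hcp : cP n π k
    · -- extra element: ppos k - 1
      have hpk2 : 2 ≤ ppos n π k := by
        by_contra hc
        have h1 : ppos n π k = 1 := by omega
        have : pval n π (ppos n π k - 1) = 0 := by
          apply pval_eq_zero; omega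
        unfold cP at hcp
        omega
      have hj0v : k + 1 ≤ pval n π (ppos n π k - 1) := by
        unfold cP at hcp
        have hne3 : pval n π (ppos n π k - 1) ≠ k := by
          intro he
          have := (eq_ppos_of_pval π hk1 he).1
          omega
        omega
      have hstep : ppos n π k - 1 + 1 = ppos n π k := by omega
      have hj0S1 : ppos n π k - 1 ∈ S1 := by
        simp only [hS1, Finset.mem_filter, Finset.mem_Ico]
        refine ⟨⟨by omega, by omega⟩, hj0v, ?_⟩
        rw [hstep, hvk]; omega
      have hj0nS2 : ppos n π k - 1 ∉ S2 := by
        simp only [hS2, Finset.mem_filter, Finset.mem_Ico]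
        rintro ⟨_, _, hd⟩
        rw [hstep, hvk] at hd; omega
      have hss : S2 ⊂ S1 := by
        rw [Finset.ssubset_iff_of_subset hsub]
        exact ⟨_, hj0S1, hj0nS2⟩
      have := Finset.card_lt_card hss
      have e3 : Wd n π k = totk n π k + 1 := by unfold Wd; rw [if_pos hcp]
      omega
    · have := Finset.card_le_card hsub
      have e3 : Wd n π k = totk n π k + 0 := by unfold Wd; rw [if_neg hcp]
      omega

theorem smem_self (π : Equiv.Perm (Fin n)) (v : ℕ) : Smem n π v v :=
  fun _ h1 h2 => absurd (lt_of_le_of_lt h1 h2) (lt_irrefl _)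

theorem smem_mono (π : Equiv.Perm (Fin n)) {m v : ℕ} (h : Smem n π m v) :
    Smem n π (m+1) v := fun u h1 h2 => h u (by omega) h2

theorem smem_rec (π : Equiv.Perm (Fin n)) {m v : ℕ} (hm : 1 ≤ m) (hmv : m < v)
    (hv : v ≤ n) :
    Smem n π m v ↔ (Smem n π (m+1) v ∧ blt n π (m+1) (ppos n π v) < Wd n π m) := by
  constructor
  · intro h
    exact ⟨smem_mono π h,
      (pos_lt_iff π hm (by omega) hmv hv).mp (h m le_rfl hmv)⟩
  · rintro ⟨h1, h2⟩ u hu1 hu2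
    rcases Nat.eq_or_lt_of_le hu1 with he | hlt
    · rw [← he]
      exact (pos_lt_iff π hm (by omega) hmv hv).mpr h2
    · exact h1 u hlt hu2

end CoSylv
namespace CoSylv

variable {n : ℕ}

theorem joint (σ τ : Equiv.Perm (Fin n))
    (hT : ∀ k, 1 ≤ k → k ≤ n → totk n τ k = totk n σ k)
    (hC : ∀ k, 1 ≤ k → k ≤ n → (cP n τ k ↔ cP n σ k)) :
    ∀ d m v, 1 ≤ m → m + d = v → v ≤ n →
      ((Smem n τ m v ↔ Smem n σ m v) ∧
       (Smem n σ m v → blt n τ m (ppos n τ v) = blt n σ m (ppos n σ v))) := by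
  have hW : ∀ k, 1 ≤ k → k ≤ n → Wd n τ k = Wd n σ k := by
    intro k h1 h2
    unfold Wd
    rw [hT k h1 h2, if_congr (hC k h1 h2) rfl rfl]
  intro d
  induction d with
  | zero =>
    intro m v h1 h2 h3
    have : m = v := by omega
    subst this
    refine ⟨⟨fun _ => smem_self σ m, fun _ => smem_self τ m⟩, fun _ => ?_⟩
    rw [← tot_eq_blt τ h1 h3, ← tot_eq_blt σ h1 h3]
    exact hT m h1 h3
  | succ d ih =>
    intro m v h1 h2 h3
    have hmv : m < v := by omega
    have IH := ih (m+1) v (by omega) (by omega) h3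
    have hiff : Smem n τ m v ↔ Smem n σ m v := by
      rw [smem_rec τ h1 hmv h3, smem_rec σ h1 hmv h3]
      constructor
      · rintro ⟨hs, hb⟩
        have hs' := IH.1.mp hs
        exact ⟨hs', by rw [← IH.2 hs', ← hW m h1 (by omega)]; exact hb⟩
      · rintro ⟨hs, hb⟩
        have hs' := IH.1.mpr hs
        exact ⟨hs', by rw [IH.2 hs, hW m h1 (by omega)]; exact hb⟩
    refine ⟨hiff, fun hσm => ?_⟩
    have hτm := hiff.mpr hσm
    have h1τ : ppos n τ v < ppos n τ m := hτm m le_rfl hmv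
    have h1σ : ppos n σ v < ppos n σ m := hσm m le_rfl hmv
    rw [blt_stab τ h1 h1τ, blt_stab σ h1 h1σ]
    exact IH.2 (smem_mono σ hσm)

theorem chooseP_spec (π : Equiv.Perm (Fin n)) (a b : ℕ) (h : max a 1 ≤ min b n) :
    chooseP n π a b ∈ (Finset.Icc (max a 1) (min b n)).filter
        (fun v => Smem n π (max a 1) v) ∧
    ∀ x ∈ (Finset.Icc (max a 1) (min b n)).filter (fun v => Smem n π (max a 1) v),
      x ≤ chooseP n π a b := by
  classical
  set a' := max a 1 with ha'
  set b' := min b n with hb'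
  have ha1 : 1 ≤ a' := le_max_right a 1
  have hbn : b' ≤ n := min_le_right b n
  have hne : (Finset.Icc a' b').Nonempty := ⟨a', Finset.mem_Icc.mpr ⟨le_rfl, h⟩⟩
  have hne2 : ((Finset.Icc a' b').image (ppos n π)).Nonempty := hne.image _
  set S0 := (Finset.Icc a' b').image (ppos n π) with hS0
  have hmin : S0.min = (S0.min' hne2 : WithBot ℕ) := (Finset.coe_min' hne2).symm
  obtain ⟨v0, hv0mem, hv0⟩ := Finset.mem_image.mp (Finset.min'_mem S0 hne2)
  rw [Finset.mem_Icc] at hv0mem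
  have hch : chooseP n π a b = v0 := by
    unfold chooseP
    rw [hmin]
    show pval n π ((S0.min' hne2 : WithBot ℕ).getD 0) = v0
    rw [show ((S0.min' hne2 : WithBot ℕ)).getD 0 = S0.min' hne2 from rfl, ← hv0]
    exact pval_ppos π (by omega) (by omega)
  have hminle : ∀ u, a' ≤ u → u ≤ b' → ppos n π v0 ≤ ppos n π u := by
    intro u h1 h2
    rw [hv0]
    exact Finset.min'_le S0 _ (Finset.mem_image.mpr ⟨u, Finset.mem_Icc.mpr ⟨h1, h2⟩, rfl⟩)
  rw [hch]
  constructor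
  · simp only [Finset.mem_filter, Finset.mem_Icc]
    refine ⟨⟨hv0mem.1, hv0mem.2⟩, ?_⟩
    intro u hu1 hu2
    have hle := hminle u hu1 (by omega)
    have hneq : ppos n π v0 ≠ ppos n π u := by
      intro he
      have := ppos_inj π (by omega) (by omega) (by omega) (by omega) he
      omega
    omega
  · intro x hx
    simp only [Finset.mem_filter, Finset.mem_Icc] at hx
    obtain ⟨⟨hx1, hx2⟩, hxs⟩ := hx
    by_contra hc
    have hlt : v0 < x := by omega
    have := hxs v0 hv0mem.1 hlt
    have := hminle x hx1 hx2
    omega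

theorem chooseP_degenerate (π : Equiv.Perm (Fin n)) (a b : ℕ)
    (h : ¬ max a 1 ≤ min b n) : chooseP n π a b = 0 := by
  classical
  unfold chooseP
  rw [Finset.Icc_eq_empty h, Finset.image_empty]
  show pval n π ((⊥ : WithBot ℕ).getD 0) = 0
  rw [show ((⊥ : WithBot ℕ)).getD 0 = 0 from rfl]
  exact pval_eq_zero π (by omega)

theorem chooseP_eq (σ τ : Equiv.Perm (Fin n))
    (hS : ∀ m v, 1 ≤ m → m ≤ v → v ≤ n → (Smem n τ m v ↔ Smem n σ m v)) :
    chooseP n τ = chooseP n σ := by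
  classical
  funext a b
  by_cases h : max a 1 ≤ min b n
  · have hfeq : (Finset.Icc (max a 1) (min b n)).filter (fun v => Smem n τ (max a 1) v)
        = (Finset.Icc (max a 1) (min b n)).filter (fun v => Smem n σ (max a 1) v) := by
      apply Finset.filter_congr
      intro v hv
      rw [Finset.mem_Icc] at hv
      have := hS (max a 1) v (le_max_right a 1) hv.1 (le_trans hv.2 (min_le_right b n))
      simp [this]
    have hτs := chooseP_spec τ a b h
    have hσs := chooseP_spec σ a b h
    rw [hfeq] at hτs
    exact le_antisymm (hσs.2 _ hτs.1) (hτs.2 _ hσs.1)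
  · rw [chooseP_degenerate τ a b h, chooseP_degenerate σ a b h]

end CoSylv
namespace CoSylv

variable {n : ℕ}

theorem totk_top (π : Equiv.Perm (Fin n)) : totk n π n = 0 := by
  classical
  unfold totk
  rw [Finset.card_eq_zero, Finset.filter_eq_empty_iff]
  rintro ⟨p1, p2⟩ hp
  dsimp only
  rintro ⟨h1, h2, h3, h4⟩
  have := pval_le π p1
  omega

theorem cP_top (π : Equiv.Perm (Fin n)) (hn : 1 ≤ n) : ¬ cP n π n := by
  unfold cP
  rw [not_not]
  have hle := pval_le π (ppos n π n - 1)
  have hne : pval n π (ppos n π n - 1) ≠ n := by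
    intro he
    have h1 := (eq_ppos_of_pval π hn he).1
    have h2 := (ppos_mem π hn le_rfl).1
    omega
  omega

theorem pval1_eq (π : Equiv.Perm (Fin n)) {j : ℕ} (h : j ≤ n) :
    pval1 n π j = pval n π j := by
  unfold pval1
  by_cases hj : j = 0
  · rw [if_pos hj, hj, pval_eq_zero π (by omega)]
  · rw [if_neg hj, if_pos h]

theorem fv0_odd (τ : Equiv.Perm (Fin n)) {k : ℕ} (hk1 : 1 ≤ k) (hk2 : k + 1 ≤ n) :
    fv0Path n τ (2*k+1) = (if pval n τ (ppos n τ k - 1) < k then false else true) := by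
  unfold fv0Path
  rw [if_neg (by omega : ¬ (2*k+1 = 0 ∨ 2*n < 2*k+1)),
    if_neg (by omega : ¬ (2*k+1 = 1)), if_neg (by omega : ¬ (2*k+1 = 2*n)),
    if_neg (by omega : ¬ ((2*k+1-1) % 2 = 1))]
  rw [show (2*k+1-1)/2 = k from by omega]
  rw [pval_ppos τ hk1 (by omega)]

theorem psi_odd (D : ℕ → Bool) {k : ℕ} (hk1 : 1 ≤ k) (hk2 : k + 1 ≤ n) :
    psiStep n D (2*k+1) = D (2*k) := by
  unfold psiStep
  rw [if_neg (fun hh => by omega : ¬ ((2*k+1) % 2 = 0 ∧ 2 ≤ 2*k+1 ∧ 2*k+1+1 ≤ 2*n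
    ∧ D (2*k+1) ≠ D (2*k+1+1)))]
  by_cases hD : D (2*k+1-1) ≠ D (2*k+1)
  · rw [if_pos ⟨by omega, by omega, by omega, hD⟩]
    congr 1
  · rw [if_neg (fun hh => hD hh.2.2.2)]
    rw [not_not] at hD
    rw [← hD]
    congr 1

theorem fv_even (σ : Equiv.Perm (Fin n)) {k : ℕ} (hk1 : 1 ≤ k) (hk2 : k ≤ n) :
    fvPath n σ (2*k) = (if pval n σ (ppos n σ k - 1) < k then false else true) := by
  have hpm := ppos_mem σ hk1 hk2
  unfold fvPath
  rw [if_pos (by omega : 1 ≤ 2*k ∧ 2*k ≤ 2*n), if_neg (by omega : ¬ (2*k % 2 = 1))]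
  rw [show 2*k/2 = k from by omega]
  rw [pval1_eq σ hpm.2, pval_ppos σ hk1 hk2, pval1_eq σ (by omega : ppos n σ k - 1 ≤ n)]

theorem bool_if_eq {A B : Prop} [Decidable A] [Decidable B]
    (h : (if A then false else true) = (if B then false else true)) : A ↔ B := by
  by_cases hA : A <;> by_cases hB : B <;>
    simp [hA, hB] at h ⊢

end CoSylv

/-- Theorem: the bijection `Ψ = (ψ_FV⁰)⁻¹ ∘ ψ ∘ ψ_FV` preserves co-sylvester classes:
`σ` and `Ψ(σ)` have the same binary search tree.  `τ = Ψ(σ)` is expressed by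
`ψ_FV⁰ τ = ψ (ψ_FV σ)`. -/
theorem psi_preserves_cosylvester_classes (n : ℕ) (σ τ : Equiv.Perm (Fin n))
    (hτ : (fv0Path n τ, fv0Weight n τ) = (psiStep n (fvPath n σ), fvWeight n σ)) :
    bstOfPerm n τ = bstOfPerm n σ := by

  classical
  open CoSylv in
  have hPath : fv0Path n τ = psiStep n (fvPath n σ) := congrArg Prod.fst hτ
  have hWeight : fv0Weight n τ = fvWeight n σ := congrArg Prod.snd hτ
  have hT : ∀ k, 1 ≤ k → k ≤ n → totk n τ k = totk n σ k := by
    intro k hk1 hk2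
    rcases Nat.lt_or_ge k n with hlt | hge
    · have h := congrFun hWeight k
      unfold fv0Weight fvWeight at h
      rw [if_pos ⟨hk1, by omega⟩, if_pos ⟨hk1, hk2⟩] at h
      exact h
    · have hkn : k = n := by omega
      subst hkn
      rw [CoSylv.totk_top, CoSylv.totk_top]
  have hC : ∀ k, 1 ≤ k → k ≤ n → (CoSylv.cP n τ k ↔ CoSylv.cP n σ k) := by
    intro k hk1 hk2
    rcases Nat.lt_or_ge k n with hlt | hge
    · have h := congrFun hPath (2*k+1)
      rw [CoSylv.fv0_odd τ hk1 (by omega), CoSylv.psi_odd (fvPath n σ) hk1 (by omega),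
        CoSylv.fv_even σ hk1 hk2] at h
      have hiff := CoSylv.bool_if_eq h
      unfold CoSylv.cP
      rw [hiff]
    · have hkn : k = n := by omega
      subst hkn
      constructor
      · intro h; exact absurd h (CoSylv.cP_top τ hk1)
      · intro h; exact absurd h (CoSylv.cP_top σ hk1)
  have hJ := CoSylv.joint σ τ hT hC
  have hS : ∀ m v, 1 ≤ m → m ≤ v → v ≤ n →
      (CoSylv.Smem n τ m v ↔ CoSylv.Smem n σ m v) := by
    intro m v h1 h2 h3
    exact (hJ (v - m) m v h1 (by omega) h3).1
  have hch := CoSylv.chooseP_eq σ τ hS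
  unfold bstOfPerm
  rw [hch]
end
end
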